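/- Let T be a tree on n ≥ 2 vertices. For any a_3,...,a_n ∈ ℂ there exist a_1, a_2 ∈ ℂ such that (a_1,...,a_n) is a common zero of all partial derivatives of the Steiner 3-form p_T^{(3)} (a Steiner nullvector). -/

import Mathlib

open MvPolynomial Finset

/-- The Steiner distance of a set `S` of vertices of `G`: the minimum number of
edges of a connected subgraph of `G` containing `S`. -/
noncomputable def steinerDist {V : Type*} (G : SimpleGraph V) (S : Set V) : ℕ :=
  sInf {m | ∃ H : G.Subgraph, H.Connected ∧ S ⊆ H.verts ∧ H.edgeSet.ncard = m}

/-- The Steiner 3-form of a graph on `Fin n`. -/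
noncomputable def steinerForm3 {n : ℕ} (G : SimpleGraph (Fin n)) : MvPolynomial (Fin n) ℂ :=
  ∑ i, ∑ j, ∑ k, MvPolynomial.C (steinerDist G {i, j, k} : ℂ) *
    MvPolynomial.X i * MvPolynomial.X j * MvPolynomial.X k

/-- The Steiner k-form of a graph on `Fin n`. -/
noncomputable def steinerFormK {n : ℕ} (G : SimpleGraph (Fin n)) (k : ℕ) :
    MvPolynomial (Fin n) ℂ :=
  ∑ f : Fin k → Fin n, MvPolynomial.C (steinerDist G (Set.range f) : ℂ) *
    ∏ j, MvPolynomial.X (f j)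

noncomputable def sPoly (n : ℕ) : MvPolynomial (Fin n) ℂ := ∑ r, MvPolynomial.X r

noncomputable def gPoly {n : ℕ} (G : SimpleGraph (Fin n)) : MvPolynomial (Fin n) ℂ :=
  3 * ∑ i, ∑ j, if i < j then
    MvPolynomial.C (G.dist i j : ℂ) * MvPolynomial.X i * MvPolynomial.X j else 0

/-!
In a tree, an edge lies on the path from `u` to `v` iff deleting it separates `u` from `v`.
Deleting an edge leaves two sides, so an edge separating some pair of `{i, j, k}` separates
exactly two of the three pairs; hence `2 d(i, j, k) = d(i, j) + d(j, k) + d(i, k)`, and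
`2 p_T = 3 s q` with `s = ∑ x_r` and `q = ∑ d(i, j) x_i x_j`. By the product rule every common
zero of `s` and `q` is a Steiner nullvector. On the line `a' + t (e₁ - e₂)`, where `a'` has sum
zero and agrees with `a` away from the first two vertices, `s` vanishes and `q` is a quadratic
in `t` with leading coefficient `-2 d(1, 2) ≠ 0`, so it has a complex root.
-/

theorem Set.two_mul_ncard_union {α : Type*} [Finite α] (s t : Set α) :
    2 * (s ∪ t).ncard = s.ncard + t.ncard + (symmDiff s t).ncard := by
  have hsub : s ∩ t ⊆ s ∪ t := Set.inter_subset_left.trans Set.subset_union_left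
  rw [symmDiff_eq_sup_sdiff_inf]
  change _ = _ + _ + ((s ∪ t) \ (s ∩ t)).ncard
  rw [Set.ncard_sdiff hsub]
  have := Set.ncard_union_add_ncard_inter s t
  have := Set.ncard_le_ncard hsub
  omega

theorem Finset.sum_sum_sum_pairSum_mul {ι R : Type*} [Fintype ι] [CommSemiring R]
    (f : ι → ι → R) (x : ι → R) :
    ∑ i, ∑ j, ∑ k, (f i j + f j k + f i k) * x i * x j * x k =
      3 * ((∑ i, x i) * ∑ i, ∑ j, f i j * x i * x j) := by
  set Q := ∑ i, ∑ j, f i j * x i * x j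
  have hij : ∑ i, ∑ j, ∑ k, f i j * x i * x j * x k = (∑ i, x i) * Q := by
    simp_rw [mul_comm _ Q, Q, sum_mul, mul_sum]
  have hjk : ∑ i, ∑ j, ∑ k, f j k * x i * x j * x k = (∑ i, x i) * Q := by
    simp_rw [Q, sum_mul, mul_sum]
    exact sum_congr rfl fun i _ => sum_congr rfl fun j _ => sum_congr rfl fun k _ => by ring
  have hik : ∑ i, ∑ j, ∑ k, f i k * x i * x j * x k = (∑ i, x i) * Q := by
    simp_rw [mul_comm _ Q, Q, sum_mul, mul_sum]
    exact sum_congr rfl fun i _ => sum_comm.trans <|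
      sum_congr rfl fun k _ => sum_congr rfl fun j _ => by ring
  simp only [add_mul, sum_add_distrib, hij, hjk, hik]
  ring

theorem Complex.exists_quadratic_form_eq_zero_on_line {ι : Type*} [Fintype ι] (d : ι → ι → ℂ)
    (u v : ι → ℂ) (hv : ∑ i, ∑ j, d i j * v i * v j ≠ 0) :
    ∃ t : ℂ, ∑ i, ∑ j, d i j * (u i + t * v i) * (u j + t * v j) = 0 := by
  obtain ⟨t, ht⟩ := exists_quadratic_eq_zero hv (IsAlgClosed.exists_eq_mul_self _)
    (b := ∑ i, ∑ j, d i j * (u i * v j + v i * u j)) (c := ∑ i, ∑ j, d i j * u i * u j)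
  refine ⟨t, Eq.trans ?_ ht⟩
  simp only [sum_mul, ← sum_add_distrib]
  exact sum_congr rfl fun i _ => sum_congr rfl fun j _ => by ring

namespace SimpleGraph

variable {V : Type*} {G : SimpleGraph V}

def separatingEdges (G : SimpleGraph V) (u v : V) : Set (Sym2 V) :=
  {e | ¬(G.deleteEdges {e}).Reachable u v}

theorem mem_edges_of_mem_separatingEdges {u v : V} {e : Sym2 V}
    (he : e ∈ G.separatingEdges u v) (p : G.Walk u v) : e ∈ p.edges := by
  induction e with
  | h x y =>
    by_contra hp
    exact he (reachable_deleteEdges_iff_exists_walk.mpr ⟨p, hp⟩)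

theorem IsAcyclic.edgeSet_eq_separatingEdges (hG : G.IsAcyclic) {u v : V} {p : G.Walk u v}
    (hp : p.IsPath) : p.edgeSet = G.separatingEdges u v := by
  classical
  ext e
  refine ⟨fun hep hreach => ?_, fun he => mem_edges_of_mem_separatingEdges he p⟩
  induction e with
  | h x y =>
    obtain ⟨q, hq⟩ := reachable_deleteEdges_iff_exists_walk.mp hreach
    have hqp : q.bypass = p :=
      congrArg Subtype.val ((hG.subsingleton_path u v).elim ⟨_, q.bypass_isPath⟩ ⟨p, hp⟩)
    exact hq (q.edges_bypass_subset_edges (hqp ▸ hep))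

theorem Walk.IsTrail.ncard_edgeSet {u v : V} {p : G.Walk u v} (hp : p.IsTrail) :
    p.edgeSet.ncard = p.length := by
  classical
  have : p.edgeSet = ↑p.edges.toFinset := by ext; simp
  rw [this, Set.ncard_coe_finset, List.toFinset_card_of_nodup hp.edges_nodup, p.length_edges]

theorem IsTree.ncard_separatingEdges (hG : G.IsTree) (u v : V) :
    (G.separatingEdges u v).ncard = G.dist u v := by
  obtain ⟨p, hp⟩ := hG.connected.exists_walk_length_eq_dist u v
  have hpath := p.isPath_of_length_eq_dist hp
  rw [← hG.isAcyclic.edgeSet_eq_separatingEdges hpath, hpath.isTrail.ncard_edgeSet, hp]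

theorem Preconnected.reachable_deleteEdges_or (hG : G.Preconnected) (x y v : V) :
    (G.deleteEdges {s(x, y)}).Reachable v x ∨ (G.deleteEdges {s(x, y)}).Reachable v y := by
  obtain ⟨p⟩ := hG v x
  induction p with
  | nil => exact Or.inl .rfl
  | @cons v w z hvw p ih =>
    by_cases he : s(v, w) = s(z, y)
    · rcases Sym2.eq_iff.mp he with ⟨h, -⟩ | ⟨h, -⟩ <;> simp [h]
    · have hadj : (G.deleteEdges {s(z, y)}).Adj v w := by simp [hvw, he]
      exact ih.imp hadj.reachable.trans hadj.reachable.trans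

theorem Preconnected.reachable_deleteEdges_iff (hG : G.Preconnected) (x y u v : V) :
    (G.deleteEdges {s(x, y)}).Reachable u v ↔
      ((G.deleteEdges {s(x, y)}).Reachable u x ↔ (G.deleteEdges {s(x, y)}).Reachable v x) := by
  refine ⟨fun huv => ⟨huv.symm.trans, huv.trans⟩, fun hiff => ?_⟩
  by_cases hux : (G.deleteEdges {s(x, y)}).Reachable u x
  · exact hux.trans (hiff.mp hux).symm
  · have huy := (hG.reachable_deleteEdges_or x y u).resolve_left hux
    have hvy := (hG.reachable_deleteEdges_or x y v).resolve_left (mt hiff.mpr hux)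
    exact huy.trans hvy.symm

theorem Preconnected.separatingEdges_eq_symmDiff (hG : G.Preconnected) (i j k : V) :
    G.separatingEdges i k = symmDiff (G.separatingEdges i j) (G.separatingEdges j k) := by
  ext e
  induction e with
  | h x y =>
    simp only [separatingEdges, Set.mem_symmDiff, Set.mem_ofPred_eq]
    rw [hG.reachable_deleteEdges_iff x y i k, hG.reachable_deleteEdges_iff x y i j,
      hG.reachable_deleteEdges_iff x y j k]
    tauto

theorem Subgraph.Connected.separatingEdges_subset_edgeSet {H : G.Subgraph} (hH : H.Connected)
    {u v : V} (hu : u ∈ H.verts) (hv : v ∈ H.verts) : G.separatingEdges u v ⊆ H.edgeSet := by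
  obtain ⟨p, hpH⟩ :=
    (Subgraph.preconnected_iff_forall_exists_walk_subgraph H).mp hH.preconnected hu hv
  exact fun e he =>
    Subgraph.edgeSet_mono hpH (p.mem_edges_toSubgraph.mpr (mem_edges_of_mem_separatingEdges he p))

theorem IsTree.steinerDist_eq_ncard [Finite V] (hG : G.IsTree) (i j k : V) :
    steinerDist G {i, j, k} = (G.separatingEdges i j ∪ G.separatingEdges j k).ncard := by
  obtain ⟨p, hp, -⟩ := hG.existsUnique_path i j
  obtain ⟨q, hq, -⟩ := hG.existsUnique_path j k
  have hedges : (p.append q).toSubgraph.edgeSet =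
      G.separatingEdges i j ∪ G.separatingEdges j k := by
    rw [Walk.edgeSet_toSubgraph, Walk.edgeSet_append, hG.isAcyclic.edgeSet_eq_separatingEdges hp,
      hG.isAcyclic.edgeSet_eq_separatingEdges hq]
  have hverts : {i, j, k} ⊆ (p.append q).toSubgraph.verts := by simp [Set.insert_subset_iff]
  have hpq : (p.append q).toSubgraph.Connected := (p.append q).toSubgraph_connected
  refine le_antisymm (Nat.sInf_le ⟨_, hpq, hverts, hedges ▸ rfl⟩) ?_
  refine le_csInf ⟨_, _, hpq, hverts, rfl⟩ ?_
  rintro m ⟨H, hH, hijk, rfl⟩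
  simp only [Set.insert_subset_iff, Set.singleton_subset_iff] at hijk
  exact Set.ncard_le_ncard (Set.union_subset
    (hH.separatingEdges_subset_edgeSet hijk.1 hijk.2.1)
    (hH.separatingEdges_subset_edgeSet hijk.2.1 hijk.2.2))

theorem IsTree.two_mul_steinerDist [Finite V] (hG : G.IsTree) (i j k : V) :
    2 * steinerDist G {i, j, k} = G.dist i j + G.dist j k + G.dist i k := by
  rw [hG.steinerDist_eq_ncard, Set.two_mul_ncard_union,
    ← hG.connected.preconnected.separatingEdges_eq_symmDiff, hG.ncard_separatingEdges,
    hG.ncard_separatingEdges, hG.ncard_separatingEdges]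

noncomputable def distForm [Fintype V] (G : SimpleGraph V) : MvPolynomial V ℂ :=
  ∑ i, ∑ j, C (G.dist i j : ℂ) * X i * X j

theorem eval_distForm [Fintype V] (b : V → ℂ) :
    eval b G.distForm = ∑ i, ∑ j, (G.dist i j : ℂ) * b i * b j := by
  simp [distForm]

theorem Connected.exists_eq_off_pair_and_eval_distForm_eq_zero [Fintype V] [DecidableEq V]
    (hG : G.Connected) {x y : V} (hxy : x ≠ y) (a : V → ℂ) :
    ∃ b : V → ℂ, (∀ i, i ≠ x → i ≠ y → b i = a i) ∧ ∑ i, b i = 0 ∧ eval b G.distForm = 0 := by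
  set u : V → ℂ := a - (∑ i, a i) • Pi.single y 1
  set v : V → ℂ := Pi.single x 1 - Pi.single y 1
  have hv : ∑ i, ∑ j, (G.dist i j : ℂ) * v i * v j = -2 * G.dist x y := by
    simp [v, Pi.single_apply, mul_sub, mul_ite, sum_sub_distrib, dist_comm]
    ring
  have hdist : (G.dist x y : ℂ) ≠ 0 := by exact_mod_cast (hG.pos_dist_of_ne hxy).ne'
  obtain ⟨t, ht⟩ := Complex.exists_quadratic_form_eq_zero_on_line (fun i j => (G.dist i j : ℂ))
    u v (by rw [hv]; exact mul_ne_zero (by norm_num) hdist)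
  refine ⟨fun i => u i + t * v i, fun i hx hy => ?_, ?_, by rwa [eval_distForm]⟩
  · simp [u, v, hx, hy]
  · simp [u, v, sum_add_distrib, ← mul_sum, sum_sub_distrib]

section SteinerForm

variable {N : ℕ} {G : SimpleGraph (Fin N)}

theorem IsTree.smul_steinerForm3 (hG : G.IsTree) :
    (2 : ℂ) • steinerForm3 G = (3 : ℂ) • (sPoly N * G.distForm) := by
  have hcoeff (i j k : Fin N) : (2 : ℂ) • C (steinerDist G {i, j, k} : ℂ) =
      (C (G.dist i j : ℂ) + C (G.dist j k : ℂ) + C (G.dist i k : ℂ) : MvPolynomial (Fin N) ℂ) := by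
    rw [smul_eq_C_mul, ← map_mul, ← map_add, ← map_add]
    exact congrArg C (by exact_mod_cast hG.two_mul_steinerDist i j k)
  simp only [steinerForm3, smul_sum, ← smul_mul_assoc, hcoeff]
  rw [sum_sum_sum_pairSum_mul, smul_mul_assoc, smul_eq_C_mul, map_ofNat]
  rfl

theorem IsTree.eval_pderiv_steinerForm3_eq_zero (hG : G.IsTree) {b : Fin N → ℂ}
    (hs : ∑ i, b i = 0) (hq : eval b G.distForm = 0) (r : Fin N) :
    eval b (pderiv r (steinerForm3 G)) = 0 := by
  have hs' : eval b (sPoly N) = 0 := by simpa [sPoly] using hs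
  simpa [pderiv_mul, hs', hq] using congrArg (fun f => eval b (pderiv r f)) hG.smul_steinerForm3

end SteinerForm

end SimpleGraph

theorem stmt16 {n : ℕ} (G : SimpleGraph (Fin (n + 2))) (hT : G.IsTree)
    (a : Fin (n + 2) → ℂ) :
    ∃ b : Fin (n + 2) → ℂ, (∀ i : Fin (n + 2), 2 ≤ (i : ℕ) → b i = a i) ∧
      ∀ r, MvPolynomial.eval b (MvPolynomial.pderiv r (steinerForm3 G)) = 0 := by
  obtain ⟨b, hba, hs, hq⟩ :=
    hT.connected.exists_eq_off_pair_and_eval_distForm_eq_zero (x := 0) (y := 1) (by simp) a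
  refine ⟨b, fun i hi => hba i ?_ ?_, hT.eval_pderiv_steinerForm3_eq_zero hs hq⟩ <;>
    rintro rfl <;> simp at hi
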